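/- Let w, u ∈ F₂ be independent modulo F₂', i.e. exp_x(w)·exp_y(u) − exp_y(w)·exp_x(u) ≠ 0. Then the equation w² u² = z² has no solution in M₂ = F₂/F₂'': there is no z ∈ F₂ with w² u² z⁻² ∈ F₂''. (Baumslag–Mahler, the analogue of the Vaught conjecture for the free metabelian group of rank 2, exponent 2 case.) -/

import Mathlib

/-- The total exponent of `x` in a word of the free group on `{x, y}`. -/
def expx (w : FreeGroup (Fin 2)) : ℤ :=
  Multiplicative.toAdd
    (FreeGroup.lift (fun i => Multiplicative.ofAdd (if i = 0 then (1 : ℤ) else 0)) w)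

/-- The total exponent of `y` in a word of the free group on `{x, y}`. -/
def expy (w : FreeGroup (Fin 2)) : ℤ :=
  Multiplicative.toAdd
    (FreeGroup.lift (fun i => Multiplicative.ofAdd (if i = 1 then (1 : ℤ) else 0)) w)

/-!
Through the Magnus embedding, `F₂/F₂''` is a group of pairs `(v, g)` with `g ∈ ℤ²` and
`v ∈ ℤ[ℤ²]²`, multiplied as the affine maps `a ↦ v + tᵍ • a`; the vector `v` of a word with
exponent vector `g` satisfies the Fox identity `v₁ (x - 1) + v₂ (y - 1) = tᵍ - 1`.
Let `p, q, r` be the vectors of `w, u, z`, with exponents `g, h, g + h`. Since the Koszul complex of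
`(x - 1, y - 1)` is exact, the equation `w² u² = z²` forces `tᵍ Δ ∈ (1 + tᵍ⁺ʰ)` for the
determinant `Δ = p₁ q₂ - p₂ q₁`. Modulo the lattice `L = ⟨g, h⟩` this makes the image of `Δ` in
`ℤ[ℤ²/L]` divisible by `2`. On the other hand that image is invariant under the finite group
`ℤ²/L` of order `|det(g, h)|`, and its coefficient sum is `det(g, h)`, so it is `±` the sum of
all group elements, which is not divisible by `2`.
-/

open AddMonoidAlgebra

lemma linearIndependent_pair_of_det_ne_zero {g h : ℤ × ℤ} (hdet : g.1 * h.2 - g.2 * h.1 ≠ 0) :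
    LinearIndependent ℤ ![g, h] := by
  rw [LinearIndependent.pair_iff]
  intro s t hst
  simp only [Prod.ext_iff, Prod.fst_add, Prod.snd_add, Prod.smul_fst, Prod.smul_snd,
    smul_eq_mul, Prod.fst_zero, Prod.snd_zero] at hst
  obtain ⟨h₁, h₂⟩ := hst
  have hs : s * (g.1 * h.2 - g.2 * h.1) = 0 := by linear_combination h.2 * h₁ - h.1 * h₂
  have ht : t * (g.1 * h.2 - g.2 * h.1) = 0 := by linear_combination g.1 * h₂ - g.2 * h₁
  exact ⟨(mul_eq_zero.mp hs).resolve_right hdet, (mul_eq_zero.mp ht).resolve_right hdet⟩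

theorem card_quotient_span_pair {g h : ℤ × ℤ} (hdet : g.1 * h.2 - g.2 * h.1 ≠ 0) :
    Nat.card ((ℤ × ℤ) ⧸ Submodule.span ℤ (Set.range ![g, h])) =
      (g.1 * h.2 - g.2 * h.1).natAbs := by
  rw [← Submodule.natAbs_det_basis_change (Module.Basis.finTwoProd ℤ) _
    (Module.Basis.span (linearIndependent_pair_of_det_ne_zero hdet))]
  simp [Module.Basis.det_apply, Matrix.det_fin_two, Module.Basis.toMatrix_apply,
    Module.Basis.span_apply, mul_comm h.1]

lemma closure_mkQ_pair_eq_top (L : Submodule ℤ (ℤ × ℤ)) :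
    AddSubgroup.closure {L.mkQ (1, 0), L.mkQ (0, 1)} = ⊤ := by
  refine eq_top_iff.mpr fun x _ => ?_
  obtain ⟨⟨m, n⟩, rfl⟩ := L.mkQ_surjective x
  rw [AddSubgroup.mem_closure_pair]
  exact ⟨m, n, by simp [← Submodule.Quotient.mk_smul, ← Submodule.Quotient.mk_add]⟩

theorem AddMonoidAlgebra.coeff_eq_coeff_zero_of_single_mul_eq {k G : Type*} [Semiring k]
    [AddGroup G] {f : k[G]} {s : Set G} (hs : AddSubgroup.closure s = ⊤)
    (hf : ∀ e ∈ s, single e 1 * f = f) (x : G) : f.coeff x = f.coeff 0 := by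
  let H : AddSubgroup G :=
    { carrier := {e | single e 1 * f = f}
      zero_mem' := by simp [← one_def]
      add_mem' := fun {a b} ha hb => by
        simp only [Set.mem_ofPred_eq] at *
        rw [← one_mul (1 : k), ← single_mul_single, mul_assoc, hb, ha]
      neg_mem' := fun {a} ha => by
        simp only [Set.mem_ofPred_eq] at *
        conv_lhs =>
          rw [← ha, ← mul_assoc, single_mul_single, neg_add_cancel, one_mul, ← one_def, one_mul] }
  have hx : single x 1 * f = f := (hs ▸ AddSubgroup.closure_le H |>.mpr hf) (AddSubgroup.mem_top x)
  rw [← hx, coeff_single_mul_apply, neg_add_cancel, one_mul, hx]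

noncomputable section

def T (g : ℤ × ℤ) : ℤ[ℤ × ℤ] := single g 1

lemma T_add (g h : ℤ × ℤ) : T (g + h) = T g * T h := by
  simp [T, single_mul_single]

lemma T_zero : T 0 = 1 := rfl

lemma T_neg_mul_T (g : ℤ × ℤ) : T (-g) * T g = 1 := by
  rw [← T_add, neg_add_cancel, T_zero]

lemma T_sub_one_ne_zero {g : ℤ × ℤ} (hg : g ≠ 0) : T g - 1 ≠ 0 := by
  rw [sub_ne_zero, ← T_zero, T, T, Ne, single_left_inj one_ne_zero]
  exact hg

lemma sub_one_dvd_T_sub_one (b : ℤ) : T (0, 1) - 1 ∣ T (0, b) - 1 := by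
  have hpow (n : ℕ) : T (0, n) = T (0, 1) ^ n := by simp [T, single_pow]
  obtain ⟨n, rfl | rfl⟩ := Int.eq_nat_or_neg b
  · rw [hpow]; exact sub_one_dvd_pow_sub_one _ n
  · have h : T (0, -n) - 1 = -T (0, -n) * (T (0, n) - 1) := by
      linear_combination (by simpa using T_neg_mul_T (0, (n : ℤ)) : T (0, -n) * T (0, n) = 1)
    rw [h, hpow]
    exact Dvd.dvd.mul_left (sub_one_dvd_pow_sub_one _ n) _

def fox : ℤ[ℤ × ℤ] × ℤ[ℤ × ℤ] →ₗ[ℤ[ℤ × ℤ]] ℤ[ℤ × ℤ] :=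
  (LinearMap.mulRight _ (T (1, 0) - 1)).coprod (LinearMap.mulRight _ (T (0, 1) - 1))

lemma fox_apply (v : ℤ[ℤ × ℤ] × ℤ[ℤ × ℤ]) :
    fox v = v.1 * (T (1, 0) - 1) + v.2 * (T (0, 1) - 1) := rfl

def collapseY : ℤ[ℤ × ℤ] →+* ℤ[ℤ] := mapDomainRingHom ℤ (AddMonoidHom.fst ℤ ℤ)

def embedX : ℤ[ℤ] →+* ℤ[ℤ × ℤ] := mapDomainRingHom ℤ (AddMonoidHom.inl ℤ ℤ)

lemma collapseY_single (g : ℤ × ℤ) (r : ℤ) : collapseY (single g r) = single g.1 r :=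
  mapDomain_single

lemma embedX_single (a r : ℤ) : embedX (single a r) = single (a, 0) r :=
  mapDomain_single

lemma sub_one_dvd_sub_collapseY (f : ℤ[ℤ × ℤ]) :
    T (0, 1) - 1 ∣ f - embedX (collapseY f) := by
  induction f using AddMonoidAlgebra.induction_linear with
  | zero => simp
  | add f f' hf hf' => simpa only [map_add, add_sub_add_comm] using dvd_add hf hf'
  | single g r =>
    have h : single g r - single (g.1, 0) r = single (g.1, 0) r * (T (0, g.2) - 1) := by
      simp [T, mul_sub, single_mul_single]
    rw [collapseY_single, embedX_single, h]
    exact (sub_one_dvd_T_sub_one g.2).mul_left _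

theorem sub_one_dvd_of_fox_eq_zero {v : ℤ[ℤ × ℤ] × ℤ[ℤ × ℤ]} (hv : fox v = 0) :
    T (0, 1) - 1 ∣ v.1 := by
  have hY : collapseY (T (0, 1) - 1) = 0 := by
    rw [map_sub, map_one, T, collapseY_single, sub_eq_zero]; rfl
  have hX : collapseY (T (1, 0) - 1) ≠ 0 := by
    rw [map_sub, T, collapseY_single, map_one, sub_ne_zero, one_def, Ne,
      single_left_inj one_ne_zero]
    simp
  have h1 : collapseY v.1 = 0 := by
    have := congrArg collapseY hv
    rw [fox_apply, map_add, map_mul, map_mul, hY, mul_zero, add_zero, map_zero] at this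
    exact (mul_eq_zero.mp this).resolve_right hX
  simpa [h1] using sub_one_dvd_sub_collapseY v.1

-- Evaluation at `x = y = 1` to first order: `tᵍ ↦ 1 + g ε`.
def linearization : ℤ[ℤ × ℤ] →+* TrivSqZeroExt ℤ (ℤ × ℤ) :=
  (lift ℤ _ (ℤ × ℤ)
    { toFun := fun g => 1 + TrivSqZeroExt.inr (R := ℤ) g.toAdd
      map_one' := by simp
      map_mul' := fun g h => by ext <;> simp [add_comm] }).toRingHom

lemma linearization_T (g : ℤ × ℤ) : linearization (T g) = 1 + TrivSqZeroExt.inr g := by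
  simp [linearization, T]

theorem fst_linearization_of_fox_eq {p : ℤ[ℤ × ℤ] × ℤ[ℤ × ℤ]} {g : ℤ × ℤ}
    (hp : fox p = T g - 1) : ((linearization p.1).fst, (linearization p.2).fst) = g := by
  have := congrArg (fun f => (linearization f).snd) hp
  simpa [fox_apply, linearization_T] using this

lemma sum_coeff_mapDomainRingHom {N : Type*} [AddCommGroup N] [Fintype N] (φ : ℤ × ℤ →+ N)
    (f : ℤ[ℤ × ℤ]) : ∑ x, (mapDomainRingHom ℤ φ f).coeff x = (linearization f).fst := by
  induction f using AddMonoidAlgebra.induction_linear with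
  | zero => simp
  | add f f' hf hf' =>
    simp only [map_add, coeff_add, Finsupp.add_apply, Finset.sum_add_distrib, hf, hf',
      TrivSqZeroExt.fst_add]
  | single g r =>
    simp [mapDomainRingHom, mapDomain_single, linearization]

def foxDet (p q : ℤ[ℤ × ℤ] × ℤ[ℤ × ℤ]) : ℤ[ℤ × ℤ] := p.1 * q.2 - p.2 * q.1

section foxDet

variable {p q : ℤ[ℤ × ℤ] × ℤ[ℤ × ℤ]} {g h : ℤ × ℤ}

lemma foxDet_mul_T_sub_one_left (hp : fox p = T g - 1) (hq : fox q = T h - 1) :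
    foxDet p q * (T (1, 0) - 1) = q.2 * (T g - 1) - p.2 * (T h - 1) := by
  rw [fox_apply] at hp hq
  rw [foxDet]
  linear_combination q.2 * hp - p.2 * hq

lemma foxDet_mul_T_sub_one_right (hp : fox p = T g - 1) (hq : fox q = T h - 1) :
    foxDet p q * (T (0, 1) - 1) = p.1 * (T h - 1) - q.1 * (T g - 1) := by
  rw [fox_apply] at hp hq
  rw [foxDet]
  linear_combination p.1 * hq - q.1 * hp

lemma fst_linearization_foxDet (hp : fox p = T g - 1) (hq : fox q = T h - 1) :
    (linearization (foxDet p q)).fst = g.1 * h.2 - g.2 * h.1 := by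
  rw [← fst_linearization_of_fox_eq hp, ← fst_linearization_of_fox_eq hq]
  simp [foxDet]

theorem exists_T_mul_foxDet_eq {r : ℤ[ℤ × ℤ] × ℤ[ℤ × ℤ]} (hp : fox p = T g - 1)
    (hq : fox q = T h - 1) (hr : fox r = T (g + h) - 1)
    (heq : (1 + T g) • p + (T g ^ 2 * (1 + T h)) • q = (1 + T (g + h)) • r) :
    ∃ μ, T g * foxDet p q = (1 + T g * T h) * μ := by
  obtain ⟨μ, hμ⟩ : T (0, 1) - 1 ∣ (r - p - T g • q).1 := by
    apply sub_one_dvd_of_fox_eq_zero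
    rw [map_sub, map_sub, map_smul, hp, hq, hr, T_add, smul_eq_mul]
    ring
  have heq₁ := congrArg Prod.fst heq
  simp only [Prod.fst_add, Prod.smul_fst, Prod.fst_sub, smul_eq_mul, T_add] at heq₁ hμ
  refine ⟨-μ, mul_left_cancel₀ (T_sub_one_ne_zero (g := (0, 1)) (by simp)) ?_⟩
  linear_combination (T g) * foxDet_mul_T_sub_one_right hp hq - heq₁ - (1 + T g * T h) * hμ

end foxDet

def reduceMod (g h : ℤ × ℤ) :
    ℤ[ℤ × ℤ] →+* ℤ[(ℤ × ℤ) ⧸ Submodule.span ℤ (Set.range ![g, h])] :=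
  mapDomainRingHom ℤ (Submodule.span ℤ (Set.range ![g, h])).mkQ.toAddMonoidHom

lemma reduceMod_T (g h e : ℤ × ℤ) :
    reduceMod g h (T e) = single ((Submodule.span ℤ (Set.range ![g, h])).mkQ e) 1 :=
  mapDomain_single

lemma reduceMod_T_of_mem {g h e : ℤ × ℤ} (he : e ∈ Submodule.span ℤ (Set.range ![g, h])) :
    reduceMod g h (T e) = 1 := by
  rw [reduceMod_T, Submodule.mkQ_apply, (Submodule.Quotient.mk_eq_zero _).mpr he]
  rfl

theorem fst_linearization_eq_natAbs_mul_coeff {g h : ℤ × ℤ} (hdet : g.1 * h.2 - g.2 * h.1 ≠ 0)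
    {f : ℤ[ℤ × ℤ]} (hX : reduceMod g h (f * (T (1, 0) - 1)) = 0)
    (hY : reduceMod g h (f * (T (0, 1) - 1)) = 0) :
    (linearization f).fst = (g.1 * h.2 - g.2 * h.1).natAbs * (reduceMod g h f).coeff 0 := by
  have hcard := card_quotient_span_pair hdet
  have : Finite ((ℤ × ℤ) ⧸ Submodule.span ℤ (Set.range ![g, h])) :=
    Nat.finite_of_card_ne_zero (by rw [hcard]; exact Int.natAbs_ne_zero.mpr hdet)
  let _ := Fintype.ofFinite ((ℤ × ℤ) ⧸ Submodule.span ℤ (Set.range ![g, h]))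
  have hconst := coeff_eq_coeff_zero_of_single_mul_eq (f := reduceMod g h f)
    (closure_mkQ_pair_eq_top (Submodule.span ℤ (Set.range ![g, h]))) (by
    rintro e (rfl | rfl)
    · rwa [map_mul, map_sub, map_one, reduceMod_T, mul_sub, mul_one, sub_eq_zero, mul_comm] at hX
    · rwa [map_mul, map_sub, map_one, reduceMod_T, mul_sub, mul_one, sub_eq_zero, mul_comm] at hY)
  calc (linearization f).fst = ∑ x, (reduceMod g h f).coeff x :=
        (sum_coeff_mapDomainRingHom _ f).symm
    _ = _ := by
      rw [Finset.sum_congr rfl fun x _ => hconst x, Finset.sum_const, Finset.card_univ,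
        ← Nat.card_eq_fintype_card, hcard, nsmul_eq_mul]

theorem false_of_sq_relation {g h : ℤ × ℤ} (hdet : g.1 * h.2 - g.2 * h.1 ≠ 0)
    {p q r : ℤ[ℤ × ℤ] × ℤ[ℤ × ℤ]} (hp : fox p = T g - 1)
    (hq : fox q = T h - 1) (hr : fox r = T (g + h) - 1)
    (heq : (1 + T g) • p + (T g ^ 2 * (1 + T h)) • q = (1 + T (g + h)) • r) : False := by
  have hg : reduceMod g h (T g) = 1 := reduceMod_T_of_mem (Submodule.subset_span ⟨0, rfl⟩)
  have hh : reduceMod g h (T h) = 1 := reduceMod_T_of_mem (Submodule.subset_span ⟨1, rfl⟩)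
  obtain ⟨μ, hμ⟩ := exists_T_mul_foxDet_eq hp hq hr heq
  have heven : reduceMod g h (foxDet p q) = reduceMod g h μ + reduceMod g h μ := by
    simpa [hg, hh, ← two_mul, one_add_one_eq_two] using congrArg (reduceMod g h) hμ
  have hsum := fst_linearization_eq_natAbs_mul_coeff hdet (f := foxDet p q)
    (by rw [foxDet_mul_T_sub_one_left hp hq]; simp [hg, hh])
    (by rw [foxDet_mul_T_sub_one_right hp hq]; simp [hg, hh])
  rw [fst_linearization_foxDet hp hq, heven, coeff_add, Finsupp.add_apply] at hsum
  have habs := congrArg Int.natAbs hsum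
  rw [Int.natAbs_mul, Int.natAbs_natCast] at habs
  have := (mul_eq_left₀ (Int.natAbs_ne_zero.mpr hdet)).mp habs.symm
  omega

@[ext]
structure Magnus where
  vec : ℤ[ℤ × ℤ] × ℤ[ℤ × ℤ]
  deg : ℤ × ℤ

namespace Magnus

instance : Mul Magnus := ⟨fun m n => ⟨m.vec + T m.deg • n.vec, m.deg + n.deg⟩⟩
instance : One Magnus := ⟨⟨0, 0⟩⟩
instance : Inv Magnus := ⟨fun m => ⟨-(T (-m.deg) • m.vec), -m.deg⟩⟩

@[simp] lemma vec_mul (m n : Magnus) : (m * n).vec = m.vec + T m.deg • n.vec := rfl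
@[simp] lemma deg_mul (m n : Magnus) : (m * n).deg = m.deg + n.deg := rfl
@[simp] lemma vec_one : (1 : Magnus).vec = 0 := rfl
@[simp] lemma deg_one : (1 : Magnus).deg = 0 := rfl
@[simp] lemma vec_inv (m : Magnus) : m⁻¹.vec = -(T (-m.deg) • m.vec) := rfl
@[simp] lemma deg_inv (m : Magnus) : m⁻¹.deg = -m.deg := rfl

instance : Group Magnus where
  mul_assoc a b c := by ext1 <;> simp [T_add, smul_add, mul_smul, add_assoc]
  one_mul a := by ext1 <;> simp [T_zero]
  mul_one a := by ext1 <;> simp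
  inv_mul_cancel a := by ext1 <;> simp

def degHom : Magnus →* Multiplicative (ℤ × ℤ) where
  toFun m := .ofAdd m.deg
  map_one' := rfl
  map_mul' _ _ := rfl

lemma mul_comm_of_deg_eq_zero {m n : Magnus} (hm : m.deg = 0) (hn : n.deg = 0) :
    m * n = n * m := by
  ext1 <;> simp [hm, hn, T_zero, add_comm]

theorem derivedSeries_two : derivedSeries Magnus 2 = ⊥ := by
  have h1 : derivedSeries Magnus 1 ≤ degHom.ker := by
    rw [derivedSeries_one]; exact Abelianization.commutator_subset_ker degHom
  rw [derivedSeries_succ, eq_bot_iff, Subgroup.commutator_le]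
  intro m hm n hn
  rw [Subgroup.mem_bot, commutatorElement_eq_one_iff_mul_comm]
  exact mul_comm_of_deg_eq_zero (h1 hm) (h1 hn)

def foxSubgroup : Subgroup Magnus where
  carrier := {m | fox m.vec = T m.deg - 1}
  one_mem' := by simp [T_zero]
  mul_mem' {m n} hm hn := by
    simp only [Set.mem_ofPred_eq, vec_mul, deg_mul, map_add, map_smul, smul_eq_mul, T_add] at *
    rw [hm, hn]; ring
  inv_mem' {m} hm := by
    simp only [Set.mem_ofPred_eq, vec_inv, deg_inv, map_neg, map_smul, smul_eq_mul] at *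
    rw [hm]
    linear_combination -T_neg_mul_T m.deg

lemma sq_mul_sq_eq_sq {m n k : Magnus} (h : m ^ 2 * n ^ 2 = k ^ 2) :
    k.deg = m.deg + n.deg ∧
      (1 + T m.deg) • m.vec + (T m.deg ^ 2 * (1 + T n.deg)) • n.vec =
        (1 + T (m.deg + n.deg)) • k.vec := by
  have hdeg := congrArg deg h
  have hvec := congrArg vec h
  simp only [pow_two, vec_mul, deg_mul] at hdeg hvec
  have hk : k.deg = m.deg + n.deg := by
    rw [Prod.ext_iff] at hdeg ⊢
    simp only [Prod.fst_add, Prod.snd_add] at hdeg ⊢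
    omega
  refine ⟨hk, ?_⟩
  rw [hk] at hvec
  simp only [T_add] at hvec ⊢
  linear_combination (norm := module) hvec

end Magnus

def magnusRep : FreeGroup (Fin 2) →* Magnus :=
  FreeGroup.lift ![⟨(1, 0), (1, 0)⟩, ⟨(0, 1), (0, 1)⟩]

lemma deg_magnusRep (v : FreeGroup (Fin 2)) : (magnusRep v).deg = (expx v, expy v) := by
  induction v using FreeGroup.induction_on with
  | C1 => simp [expx, expy]; rfl
  | of i => fin_cases i <;> simp [magnusRep, expx, expy]
  | inv_of i ih => fin_cases i <;> simp [magnusRep, expx, expy]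
  | mul a b iha ihb => simp_all [expx, expy]

lemma fox_magnusRep (v : FreeGroup (Fin 2)) :
    fox (magnusRep v).vec = T (magnusRep v).deg - 1 :=
  FreeGroup.range_lift_le (s := Magnus.foxSubgroup) (by
    rintro _ ⟨i, rfl⟩
    fin_cases i <;> simp [Magnus.foxSubgroup, fox_apply]) ⟨v, rfl⟩

end

theorem stmt_9 (w u : FreeGroup (Fin 2))
    (h : expx w * expy u - expy w * expx u ≠ 0) :
    ¬ ∃ z : FreeGroup (Fin 2),
      w ^ 2 * u ^ 2 * (z ^ 2)⁻¹ ∈ derivedSeries (FreeGroup (Fin 2)) 2 := by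
  rintro ⟨z, hz⟩
  have hrel : magnusRep w ^ 2 * magnusRep u ^ 2 = magnusRep z ^ 2 := by
    have := map_derivedSeries_le_derivedSeries magnusRep 2 ⟨_, hz, rfl⟩
    rw [Magnus.derivedSeries_two, Subgroup.mem_bot] at this
    simpa [mul_inv_eq_one] using this
  obtain ⟨hdeg, hvec⟩ := Magnus.sq_mul_sq_eq_sq hrel
  have hfz := fox_magnusRep z
  rw [hdeg] at hfz
  rw [deg_magnusRep, deg_magnusRep] at hvec hfz
  exact false_of_sq_relation h (by simpa [deg_magnusRep] using fox_magnusRep w)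
    (by simpa [deg_magnusRep] using fox_magnusRep u) hfz hvec
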